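/- Let f : ℝⁿ → ℝ be a C¹-smooth function whose gradient is Lipschitz continuous with constant L > 0, let μ > 2, and let {x^k}, {g^k} ⊂ ℝⁿ and positive reals {ε_k} satisfy, for all k: ‖g^k − ∇f(x^k)‖ ≤ ε_{k+1}, ‖g^k‖ > μ ε_{k+1}, and x^{k+1} = x^k − (1/L)g^k. Assume that ∇f(x^k) ≠ 0 for all k and that {x^k} has an accumulation point. Then ∇f(x^k) → 0, g^k → 0, and ε_k → 0 as k → ∞. -/

import Mathlib

open Filter Topology InnerProductSpace

lemma descent_lemma {n : ℕ} (f : EuclideanSpace ℝ (Fin n) → ℝ)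
    (hf : Differentiable ℝ f) (L : ℝ)
    (hlip : ∀ x y : EuclideanSpace ℝ (Fin n),
      ‖gradient f x - gradient f y‖ ≤ L * ‖x - y‖)
    (x v : EuclideanSpace ℝ (Fin n)) :
    f (x + v) ≤ f x + ⟪gradient f x, v⟫_ℝ + L / 2 * ‖v‖ ^ 2 := by
  have hline : ∀ t : ℝ, HasDerivAt (fun t : ℝ => x + t • v) v t := by
    intro t
    simpa using ((hasDerivAt_id t).smul_const v).const_add x
  have hgd : ∀ t : ℝ, HasDerivAt (fun t : ℝ => f (x + t • v))
      ⟪gradient f (x + t • v), v⟫_ℝ t := by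
    intro t
    have h1 : HasFDerivAt f (toDual ℝ (EuclideanSpace ℝ (Fin n)) (gradient f (x + t • v))) (x + t • v) :=
      (hf (x + t • v)).hasGradientAt.hasFDerivAt
    simpa [Function.comp_def] using h1.comp_hasDerivAt t (hline t)
  set h : ℝ → ℝ := fun t => f (x + t • v) - t * ⟪gradient f x, v⟫_ℝ - L / 2 * t ^ 2 * ‖v‖ ^ 2
    with hh
  have hd : ∀ t : ℝ, HasDerivAt h
      (⟪gradient f (x + t • v), v⟫_ℝ - ⟪gradient f x, v⟫_ℝ - L / 2 * (2 * t) * ‖v‖ ^ 2) t := by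
    intro t
    have h2 : HasDerivAt (fun t : ℝ => t * ⟪gradient f x, v⟫_ℝ) ⟪gradient f x, v⟫_ℝ t := by
      simpa using (hasDerivAt_id t).mul_const ⟪gradient f x, v⟫_ℝ
    have h3 : HasDerivAt (fun t : ℝ => L / 2 * t ^ 2 * ‖v‖ ^ 2) (L / 2 * (2 * t) * ‖v‖ ^ 2) t := by
      simpa [mul_comm, mul_assoc, mul_left_comm] using
        (((hasDerivAt_pow 2 t)).const_mul (L / 2)).mul_const (‖v‖ ^ 2)
    exact ((hgd t).sub h2).sub h3
  have hanti : AntitoneOn h (Set.Icc (0:ℝ) 1) := by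
    apply antitoneOn_of_deriv_nonpos (convex_Icc 0 1)
    · exact fun t _ => ((hd t).continuousAt).continuousWithinAt
    · exact fun t _ => ((hd t).differentiableAt).differentiableWithinAt
    · intro t ht
      rw [interior_Icc] at ht
      rw [(hd t).deriv]
      have key : ⟪gradient f (x + t • v) - gradient f x, v⟫_ℝ ≤ L * t * ‖v‖ ^ 2 := by
        calc ⟪gradient f (x + t • v) - gradient f x, v⟫_ℝ
            ≤ ‖gradient f (x + t • v) - gradient f x‖ * ‖v‖ := real_inner_le_norm _ _
          _ ≤ (L * ‖(x + t • v) - x‖) * ‖v‖ := by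
              have := hlip (x + t • v) x
              exact mul_le_mul_of_nonneg_right this (norm_nonneg _)
          _ = L * t * ‖v‖ ^ 2 := by
              simp [norm_smul, abs_of_pos ht.1]; ring
      rw [inner_sub_left] at key
      nlinarith [key]
  have h10 := hanti (Set.mem_Icc.2 ⟨le_refl 0, zero_le_one⟩) (Set.mem_Icc.2 ⟨zero_le_one, le_refl 1⟩) zero_le_one
  simp only [hh, zero_smul, add_zero, one_smul, zero_pow, one_pow] at h10
  nlinarith [h10]

/-- For the IGD method with scaling factor μ > 2, the exact
gradients, the inexact gradients, and the errors all converge to zero. -/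
theorem IGD_gradients_and_errors_to_zero {n : ℕ}
    (f : EuclideanSpace ℝ (Fin n) → ℝ) (hf : ContDiff ℝ 1 f)
    (L : ℝ) (hL : 0 < L)
    (hlip : ∀ x y : EuclideanSpace ℝ (Fin n),
      ‖gradient f x - gradient f y‖ ≤ L * ‖x - y‖)
    (μ : ℝ) (hμ : 2 < μ)
    (x g : ℕ → EuclideanSpace ℝ (Fin n)) (ε : ℕ → ℝ) (hε : ∀ k : ℕ, 0 < ε k)
    (herr : ∀ k : ℕ, ‖g k - gradient f (x k)‖ ≤ ε (k + 1))
    (hbig : ∀ k : ℕ, μ * ε (k + 1) < ‖g k‖)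
    (hiter : ∀ k : ℕ, x (k + 1) = x k - (1 / L) • g k)
    (hgrad : ∀ k : ℕ, gradient f (x k) ≠ 0)
    (hacc : ∃ xbar : EuclideanSpace ℝ (Fin n), ∃ φ : ℕ → ℕ,
      StrictMono φ ∧ Tendsto (fun k => x (φ k)) atTop (𝓝 xbar)) :
    Tendsto (fun k => gradient f (x k)) atTop (𝓝 0) ∧
      Tendsto g atTop (𝓝 0) ∧ Tendsto ε atTop (𝓝 0) := by
  have hdiff : Differentiable ℝ f := hf.differentiable one_ne_zero
  have hμ0 : (0:ℝ) < μ := by linarith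
  set c : ℝ := (1/2 - 1/μ) / L with hc_def
  have hc : 0 < c := by
    have h1 : (1:ℝ)/2 - 1/μ = (μ - 2) / (2*μ) := by field_simp
    rw [hc_def, h1]
    exact div_pos (div_pos (by linarith) (by linarith)) hL
  have hdec : ∀ k, f (x (k+1)) + c * ‖g k‖^2 ≤ f (x k) := by
    intro k
    have hv := descent_lemma f hdiff L hlip (x k) ((-(1/L)) • g k)
    have hx1 : x k + (-(1/L)) • g k = x (k+1) := by
      rw [hiter k, neg_smul, ← sub_eq_add_neg]
    rw [hx1, real_inner_smul_right, norm_smul] at hv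
    have hG : (0:ℝ) ≤ ‖g k‖ := norm_nonneg _
    set G := ‖g k‖
    set I := ⟪gradient f (x k), g k⟫_ℝ with hI
    have h1 : ⟪g k - gradient f (x k), g k⟫_ℝ ≤ ε (k+1) * G :=
      le_trans (real_inner_le_norm _ _) (mul_le_mul_of_nonneg_right (herr k) hG)
    have h2 : ⟪g k, g k⟫_ℝ = G^2 := real_inner_self_eq_norm_sq _
    rw [inner_sub_left, h2, ← hI] at h1
    have h5 : ε (k+1) * G ≤ G^2 / μ := by
      rw [le_div_iff₀ hμ0]
      nlinarith [hbig k, (hε (k+1)).le]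
    have h6 : (1 - 1/μ) * G^2 ≤ I := by
      have heq : (1 - 1/μ) * G^2 = G^2 - G^2/μ := by field_simp
      linarith [h1, h5, heq]
    have habs : ‖(-(1/L))‖ = 1/L := by
      rw [Real.norm_eq_abs, abs_neg, abs_of_pos (by positivity)]
    rw [habs] at hv
    have h7 : f (x (k+1)) ≤ f (x k) + (-(1/L)) * ((1 - 1/μ) * G^2) + L/2 * (1/L * G)^2 := by
      have := mul_le_mul_of_nonneg_left h6 (by positivity : (0:ℝ) ≤ 1/L)
      linarith [hv, this]
    have h8 : f (x k) + (-(1/L)) * ((1 - 1/μ) * G^2) + L/2 * (1/L * G)^2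
        = f (x k) - c * G^2 := by
      rw [hc_def]; field_simp; ring
    linarith [h7, h8.le]
  have hanti : Antitone (fun k => f (x k)) :=
    antitone_nat_of_succ_le fun k => by nlinarith [hdec k, sq_nonneg ‖g k‖]
  obtain ⟨xbar, φ, hφ, hx⟩ := hacc
  have hfl : Tendsto (fun k => f (x (φ k))) atTop (𝓝 (f xbar)) :=
    (hf.continuous.tendsto xbar).comp hx
  have hlow : ∀ k, f xbar ≤ f (x k) := by
    intro k
    refine le_of_tendsto hfl ?_
    filter_upwards [eventually_ge_atTop k] with m hm
    exact hanti (le_trans hm (hφ.le_apply))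
  have hbdd : BddBelow (Set.range (fun k => f (x k))) :=
    ⟨f xbar, by rintro _ ⟨k, rfl⟩; exact hlow k⟩
  have hconv : Tendsto (fun k => f (x k)) atTop (𝓝 (⨅ k, f (x k))) :=
    tendsto_atTop_ciInf hanti hbdd
  have hshift : Tendsto (fun k => f (x (k+1))) atTop (𝓝 (⨅ k, f (x k))) :=
    hconv.comp (tendsto_add_atTop_nat 1)
  have hdiff0 : Tendsto (fun k => f (x k) - f (x (k+1))) atTop (𝓝 0) := by
    simpa using hconv.sub hshift
  have hg2 : Tendsto (fun k => ‖g k‖^2) atTop (𝓝 0) := by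
    apply squeeze_zero (fun k => sq_nonneg _) (fun k => ?_)
      (by simpa using hdiff0.const_mul c⁻¹)
    have h10 : c * ‖g k‖^2 ≤ f (x k) - f (x (k+1)) := by linarith [hdec k]
    calc ‖g k‖^2 = c⁻¹ * (c * ‖g k‖^2) := by field_simp
      _ ≤ c⁻¹ * (f (x k) - f (x (k+1))) :=
          mul_le_mul_of_nonneg_left h10 (inv_nonneg.2 hc.le)
  have hgn : Tendsto (fun k => ‖g k‖) atTop (𝓝 0) := by
    have h11 := (Real.continuous_sqrt.tendsto' 0 0 (by simp)).comp hg2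
    simpa [Function.comp_def, Real.sqrt_sq (norm_nonneg _)] using h11
  have hg0 : Tendsto g atTop (𝓝 0) := tendsto_zero_iff_norm_tendsto_zero.2 hgn
  have hε1 : Tendsto (fun k => ε (k+1)) atTop (𝓝 0) := by
    apply squeeze_zero (fun k => (hε _).le) (fun k => ?_)
      (by simpa using hgn.const_mul μ⁻¹)
    have := hbig k
    rw [inv_mul_eq_div, le_div_iff₀ hμ0]
    linarith
  have hε0 : Tendsto ε atTop (𝓝 0) := by
    rw [← tendsto_add_atTop_iff_nat 1]
    exact hε1
  have hgradn : Tendsto (fun k => gradient f (x k)) atTop (𝓝 0) := by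
    rw [tendsto_zero_iff_norm_tendsto_zero]
    apply squeeze_zero (fun k => norm_nonneg _) (fun k => ?_)
      (by simpa using hgn.add hε1)
    calc ‖gradient f (x k)‖ = ‖g k - (g k - gradient f (x k))‖ := by rw [sub_sub_cancel]
      _ ≤ ‖g k‖ + ‖g k - gradient f (x k)‖ := norm_sub_le _ _
      _ ≤ ‖g k‖ + ε (k+1) := by linarith [herr k]
  exact ⟨hgradn, hg0, hε0⟩
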